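/- arXiv:2307.15012 — 2 statements merged into one kernel-verified Lean document; each statement's English description precedes it below -/
import Mathlib

section
/- Let n = 3^s·t where s ≥ 1, t > 1 and 3 ∤ t. For every τ ∈ Sym([3]), every i ∈ {0, ..., s} and every x ∈ [3n], the permutation σ^i ρ_τ σ^{−i} maps x to the element obtained from x by replacing the base-3 digit x_{s−i} of ⌊x/t⌋ by τ(x_{s−i}) and leaving all other digits and X unchanged; that is, (σ^i ρ_τ σ^{−i})(x) = x + (τ(x_{s−i}) − x_{s−i})·3^{s−i}·t. -/
/-! Since `σ x = 3 (x mod n) + ⌊x/n⌋` with `⌊x/n⌋ < 3`, the shuffle moves each digit `x_p`,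
`p < s`, of `⌊x/t⌋` up to position `p + 1`, and on a single pile it multiplies distances by `3`.
Hence conjugating by `σ` turns a map that applies `τ` to digit `p + 1` into one that applies `τ`
to digit `p`, and induction on `i` starts from `ρ_τ`, which applies `τ` to the top digit
`x_s = ⌊x/n⌋`. -/

lemma shuffleAux.div_lt (k n : ℕ) (x : Fin (k * n)) : (x : ℕ) / n < k := by
  have hx := x.isLt
  have hn : 0 < n := by
    rcases Nat.eq_zero_or_pos n with rfl | h
    · simp at hx
    · exact h
  exact (Nat.div_lt_iff_lt_mul hn).mpr hx

lemma shuffleAux.mod_lt (k n : ℕ) (x : Fin (k * n)) : (x : ℕ) % n < n := by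
  have hx := x.isLt
  have hn : 0 < n := by
    rcases Nat.eq_zero_or_pos n with rfl | h
    · simp at hx
    · exact h
  exact Nat.mod_lt _ hn

lemma shuffleAux.bound1 (k n : ℕ) (x : Fin (k * n)) :
    k * ((x : ℕ) % n) + (x : ℕ) / n < k * n := by
  have h1 := shuffleAux.mod_lt k n x
  have h2 := shuffleAux.div_lt k n x
  calc k * ((x : ℕ) % n) + (x : ℕ) / n
      < k * ((x : ℕ) % n) + k := by omega
    _ = k * ((x : ℕ) % n + 1) := by ring
    _ ≤ k * n := Nat.mul_le_mul_left _ (by omega)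

lemma shuffleAux.bound2 (k n : ℕ) (x : Fin (k * n)) (j : Fin k) :
    (x : ℕ) % n + (j : ℕ) * n < k * n := by
  have h1 := shuffleAux.mod_lt k n x
  have h2 := j.isLt
  calc (x : ℕ) % n + (j : ℕ) * n
      < n + (j : ℕ) * n := by omega
    _ = ((j : ℕ) + 1) * n := by ring
    _ ≤ k * n := Nat.mul_le_mul_right _ (by omega)

/-- The standard shuffle `σ` on a deck of `k * n` cards, where the card in position
`i + j·n` (`i ∈ [n]`, `j ∈ [k]`) is sent to position `k·i + j`; equivalently
`σ(x) = k·(x mod n) + ⌊x / n⌋`. -/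
noncomputable def stdShuffle (k n : ℕ) : Equiv.Perm (Fin (k * n)) :=
  Equiv.ofBijective
    (fun x => ⟨k * ((x : ℕ) % n) + (x : ℕ) / n, shuffleAux.bound1 k n x⟩)
    (Finite.injective_iff_bijective.mp (by
      intro x y hxy
      simp only [Fin.mk.injEq] at hxy
      have hk : 0 < k := lt_of_le_of_lt (Nat.zero_le _) (shuffleAux.div_lt k n x)
      have key : ∀ z : Fin (k * n),
          (k * ((z : ℕ) % n) + (z : ℕ) / n) % k = (z : ℕ) / n ∧
          (k * ((z : ℕ) % n) + (z : ℕ) / n) / k = (z : ℕ) % n := by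
        intro z
        have hz := shuffleAux.div_lt k n z
        constructor
        · rw [Nat.mul_add_mod, Nat.mod_eq_of_lt hz]
        · rw [Nat.mul_add_div hk, Nat.div_eq_of_lt hz, Nat.add_zero]
      obtain ⟨h1x, h2x⟩ := key x
      obtain ⟨h1y, h2y⟩ := key y
      rw [hxy] at h1x h2x
      have hd : (x : ℕ) / n = (y : ℕ) / n := by omega
      have hm : (x : ℕ) % n = (y : ℕ) % n := by omega
      apply Fin.ext
      rw [← Nat.div_add_mod (x : ℕ) n, ← Nat.div_add_mod (y : ℕ) n, hd, hm]))

/-- The permutation `ρ_τ` induced by a permutation `τ` of the `k` piles: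
`ρ_τ(i + j·n) = i + τ(j)·n` for `i ∈ [n]`, `j ∈ [k]`. -/
noncomputable def pilePerm (k n : ℕ) (τ : Equiv.Perm (Fin k)) : Equiv.Perm (Fin (k * n)) :=
  Equiv.ofBijective
    (fun x => ⟨(x : ℕ) % n + ((τ ⟨(x : ℕ) / n, shuffleAux.div_lt k n x⟩ : Fin k) : ℕ) * n,
      shuffleAux.bound2 k n x _⟩)
    (Finite.injective_iff_bijective.mp (by
      intro x y hxy
      simp only [Fin.mk.injEq] at hxy
      have hn : 0 < n := lt_of_le_of_lt (Nat.zero_le _) (shuffleAux.mod_lt k n x)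
      have key : ∀ z : Fin (k * n),
          ((z : ℕ) % n + ((τ ⟨(z : ℕ) / n, shuffleAux.div_lt k n z⟩ : Fin k) : ℕ) * n) % n
            = (z : ℕ) % n ∧
          ((z : ℕ) % n + ((τ ⟨(z : ℕ) / n, shuffleAux.div_lt k n z⟩ : Fin k) : ℕ) * n) / n
            = ((τ ⟨(z : ℕ) / n, shuffleAux.div_lt k n z⟩ : Fin k) : ℕ) := by
        intro z
        have h1 := shuffleAux.mod_lt k n z
        constructor
        · rw [Nat.add_mul_mod_self_right, Nat.mod_eq_of_lt h1]
        · rw [Nat.add_mul_div_right _ _ hn, Nat.div_eq_of_lt h1, Nat.zero_add]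
      obtain ⟨h1x, h2x⟩ := key x
      obtain ⟨h1y, h2y⟩ := key y
      rw [hxy] at h1x h2x
      have hm : (x : ℕ) % n = (y : ℕ) % n := by omega
      have hv : ((τ ⟨(x : ℕ) / n, shuffleAux.div_lt k n x⟩ : Fin k) : ℕ)
          = ((τ ⟨(y : ℕ) / n, shuffleAux.div_lt k n y⟩ : Fin k) : ℕ) := by omega
      have hτ : (⟨(x : ℕ) / n, shuffleAux.div_lt k n x⟩ : Fin k)
          = ⟨(y : ℕ) / n, shuffleAux.div_lt k n y⟩ := τ.injective (Fin.ext hv)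
      have hd : (x : ℕ) / n = (y : ℕ) / n := congrArg Fin.val hτ
      apply Fin.ext
      rw [← Nat.div_add_mod (x : ℕ) n, ← Nat.div_add_mod (y : ℕ) n, hd, hm]))

/-- The shuffle group `G_{k,kn}`, generated by the standard shuffle `σ` together with
the pile permutations `ρ_τ` for all `τ ∈ Sym([k])`. -/
noncomputable def shuffleGroup (k n : ℕ) : Subgroup (Equiv.Perm (Fin (k * n))) :=
  Subgroup.closure ({stdShuffle k n} ∪ Set.range (pilePerm k n))

/-- For `x ∈ [3n]` with `n = 3^s·t`, the `i`-th base-3 digit `x_i` of `⌊x/t⌋`. -/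
def digit (t x i : ℕ) : ℕ := (x / t / 3 ^ i) % 3

lemma digit_lt (t x i : ℕ) : digit t x i < 3 := Nat.mod_lt _ (by omega)

/-- `T(x) = |{i ∈ {0,...,s} : x_i = 2}|`, the number of base-3 digits of `⌊x/t⌋`
(among positions `0,...,s`) equal to `2`. -/
def twoCount (s t x : ℕ) : ℕ :=
  ((Finset.range (s + 1)).filter (fun i => digit t x i = 2)).card

lemma stdShuffle_val (k n : ℕ) (x : Fin (k * n)) :
    (stdShuffle k n x : ℕ) = k * (x % n) + x / n := rfl

lemma pilePerm_val_eq (k n : ℕ) (τ : Equiv.Perm (Fin k)) (x : Fin (k * n)) :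
    ((pilePerm k n τ x : ℕ) : ℤ) =
      x + ((τ ⟨x / n, shuffleAux.div_lt k n x⟩ : ℕ) - (x / n : ℕ) : ℤ) * n := by
  have hx : ((x : ℕ) : ℤ) = n * (x / n : ℕ) + (x % n : ℕ) := by
    exact_mod_cast (Nat.div_add_mod x n).symm
  change ((x % n + (τ ⟨x / n, _⟩ : ℕ) * n : ℕ) : ℤ) = _
  rw [hx]
  push_cast
  ring

lemma stdShuffle_val_sub_of_div_eq (k n : ℕ) {x y : Fin (k * n)} (h : (x : ℕ) / n = y / n) :
    ((stdShuffle k n y : ℕ) : ℤ) - (stdShuffle k n x : ℕ) = k * ((y : ℤ) - x) := by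
  have hx : ((x : ℕ) : ℤ) = n * (x / n : ℕ) + (x % n : ℕ) := by
    exact_mod_cast (Nat.div_add_mod x n).symm
  have hy : ((y : ℕ) : ℤ) = n * (y / n : ℕ) + (y % n : ℕ) := by
    exact_mod_cast (Nat.div_add_mod y n).symm
  rw [stdShuffle_val, stdShuffle_val, hx, hy, h]
  push_cast
  ring

lemma conj_pow_succ_apply {α : Type*} (g r : Equiv.Perm α) (i : ℕ) (x : α) :
    ((g ^ (i + 1))⁻¹ * r * g ^ (i + 1)) x = g⁻¹ (((g ^ i)⁻¹ * r * g ^ i) (g x)) := by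
  simp only [pow_succ, mul_inv_rev, Equiv.Perm.mul_apply]

lemma digit_eq (t x p : ℕ) : digit t x p = x / (3 ^ p * t) % 3 := by
  rw [digit, Nat.div_div_eq_div_mul, mul_comm t]

lemma three_mul_mod_add_div_mod_three {u n : ℕ} (hu : 3 * u ∣ n) (a : ℕ) {q : ℕ} (hq : q < 3) :
    (3 * (a % n) + q) / (3 * u) % 3 = a / u % 3 := by
  obtain ⟨m, rfl⟩ := hu
  rw [← Nat.div_div_eq_div_mul, Nat.mul_add_div (by norm_num), Nat.div_eq_of_lt hq, add_zero,
    show 3 * u * m = u * (3 * m) by ring, Nat.mod_mul_right_div_self,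
    Nat.mod_mod_of_dvd _ (dvd_mul_right 3 m)]

lemma digit_stdShuffle_succ {t n p : ℕ} (h : 3 ^ (p + 1) * t ∣ n) (x : Fin (3 * n)) :
    digit t (stdShuffle 3 n x) (p + 1) = digit t x p := by
  rw [digit_eq, digit_eq, stdShuffle_val, show 3 ^ (p + 1) * t = 3 * (3 ^ p * t) by ring,
    three_mul_mod_add_div_mod_three (by rwa [pow_succ', mul_assoc] at h) _
      (shuffleAux.div_lt 3 n x)]

lemma three_mul_div_add_digit_add_mod (u a : ℕ) :
    3 * u * (a / (3 * u)) + (u * (a / u % 3) + a % u) = a := by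
  have := Nat.div_add_mod a (u * 3)
  rw [Nat.mod_mul, mul_comm u 3] at this
  omega

lemma exists_replace_digit {n u c : ℕ} (hu : 3 * u ∣ n) (hc : c < 3) (x : Fin (3 * n)) :
    ∃ y : Fin (3 * n), (y : ℕ) / n = x / n ∧ (y : ℤ) = x + ((c : ℤ) - (x / u % 3 : ℕ)) * u := by
  have hn : 0 < n := Nat.pos_of_ne_zero (by rintro rfl; exact x.elim0)
  have hu0 : 0 < u := by have := Nat.pos_of_dvd_of_pos hu hn; omega
  have hlow : u * c + x % u < 3 * u := by
    have := Nat.mod_lt x hu0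
    have := Nat.mul_le_mul_left u (show c ≤ 2 by omega)
    omega
  set y := 3 * u * (x / (3 * u)) + (u * c + x % u)
  have hy : y / (3 * u) = x / (3 * u) := by
    rw [Nat.mul_add_div (by positivity), Nat.div_eq_of_lt hlow, add_zero]
  obtain ⟨m, hm⟩ := hu
  have hpile : y / n = x / n := by
    simp only [hm, ← Nat.div_div_eq_div_mul, hy]
  refine ⟨⟨y, (Nat.div_lt_iff_lt_mul hn).mp (hpile ▸ shuffleAux.div_lt 3 n x)⟩, hpile, ?_⟩
  have hx : ((x : ℕ) : ℤ) = 3 * u * (x / (3 * u) : ℕ) + (u * (x / u % 3 : ℕ) + (x % u : ℕ)) := by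
    exact_mod_cast (three_mul_div_add_digit_add_mod u x).symm
  simp only [y]
  rw [hx]
  push_cast
  ring

lemma pilePerm_val_eq_digit (s t : ℕ) (τ : Equiv.Perm (Fin 3)) (x : Fin (3 * (3 ^ s * t))) :
    ((pilePerm 3 (3 ^ s * t) τ x : ℕ) : ℤ) =
      x + ((τ ⟨digit t x s, digit_lt t x s⟩ : ℕ) - (digit t x s : ℤ)) * 3 ^ s * t := by
  have htop : digit t x s = x / (3 ^ s * t) := by
    rw [digit_eq, Nat.mod_eq_of_lt (shuffleAux.div_lt 3 _ x)]
  simp only [htop, pilePerm_val_eq]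
  push_cast
  ring

/-- `σ` maps `x` with digit `p` replaced to `σ x` with digit `p + 1` replaced, because the
replacement stays inside the pile of `x`, where `σ` scales distances by `3`. -/
lemma stdShuffle_inv_val_eq_of_digit_succ {s t p : ℕ} (hp : p + 1 ≤ s) (τ : Equiv.Perm (Fin 3))
    (x z : Fin (3 * (3 ^ s * t)))
    (hz : (z : ℤ) = (stdShuffle 3 _ x : ℕ) +
      ((τ ⟨digit t (stdShuffle 3 _ x) (p + 1), digit_lt _ _ _⟩ : ℕ) -
        (digit t (stdShuffle 3 _ x) (p + 1) : ℤ)) * 3 ^ (p + 1) * t) :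
    (((stdShuffle 3 _)⁻¹ z : ℕ) : ℤ) =
      x + ((τ ⟨digit t x p, digit_lt t x p⟩ : ℕ) - (digit t x p : ℤ)) * 3 ^ p * t := by
  have hdvd : 3 ^ (p + 1) * t ∣ 3 ^ s * t := Nat.mul_dvd_mul_right (Nat.pow_dvd_pow 3 hp) t
  simp only [digit_stdShuffle_succ hdvd] at hz
  obtain ⟨y, hpile, hy⟩ := exists_replace_digit (u := 3 ^ p * t)
    (by rwa [← mul_assoc, ← pow_succ'] ) (τ ⟨digit t x p, digit_lt t x p⟩).isLt x
  rw [← digit_eq] at hy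
  have hσy : stdShuffle 3 _ y = z := by
    have hshift := stdShuffle_val_sub_of_div_eq 3 (3 ^ s * t) hpile.symm
    push_cast at hshift hy
    apply Fin.ext
    have : ((stdShuffle 3 _ y : ℕ) : ℤ) = z := by linear_combination hshift - hz + 3 * hy
    exact_mod_cast this
  rw [← hσy, Equiv.Perm.inv_def, Equiv.symm_apply_apply, hy]
  push_cast
  ring

/-- The paper composes permutations left to right, so its `σ^i ρ_τ σ^{-i}` is
`(σ ^ i)⁻¹ * ρ_τ * σ ^ i` here. -/
theorem conj_digit_action_general (s t n : ℕ) (hn : n = 3 ^ s * t) :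
    ∀ (τ : Equiv.Perm (Fin 3)) (i : ℕ), i ≤ s →
      ∀ x : Fin (3 * n),
        (((((stdShuffle 3 n) ^ i)⁻¹ * pilePerm 3 n τ * (stdShuffle 3 n) ^ i) x : ℕ) : ℤ) =
          (x : ℕ) +
            (((τ ⟨digit t (x : ℕ) (s - i), digit_lt t (x : ℕ) (s - i)⟩ : Fin 3) : ℕ) -
                (digit t (x : ℕ) (s - i) : ℤ)) * 3 ^ (s - i) * t := by
  subst hn
  intro τ i
  induction i with
  | zero =>
    intro _ x
    simpa only [pow_zero, inv_one, one_mul, mul_one, Nat.sub_zero] using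
      pilePerm_val_eq_digit s t τ x
  | succ i ih =>
    intro hi x
    have hsi : s - i = s - (i + 1) + 1 := by omega
    rw [conj_pow_succ_apply]
    refine stdShuffle_inv_val_eq_of_digit_succ (by omega) τ x _ ?_
    rw [← hsi]
    exact ih (by omega) _

/-- The permutation `σ^i ρ_τ σ^{-i}` of the paper (acting on the right, i.e. applying
`σ^i` first, then `ρ_τ`, then `σ^{-i}`) replaces the base-3 digit `x_{s-i}` of `⌊x/t⌋`
by `τ(x_{s-i})` and leaves all other digits and `X = x mod t` unchanged. -/
theorem conj_digit_action (s t n : ℕ) (hs : 1 ≤ s) (ht : 1 < t) (h3t : ¬ 3 ∣ t) (hn : n = 3 ^ s * t) :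
    ∀ (τ : Equiv.Perm (Fin 3)) (i : ℕ), i ≤ s →
      ∀ x : Fin (3 * n),
        (((((stdShuffle 3 n) ^ i)⁻¹ * pilePerm 3 n τ * (stdShuffle 3 n) ^ i) x : ℕ) : ℤ) =
          (x : ℕ) +
            (((τ ⟨digit t (x : ℕ) (s - i), digit_lt t (x : ℕ) (s - i)⟩ : Fin 3) : ℕ) -
                (digit t (x : ℕ) (s - i) : ℤ)) * 3 ^ (s - i) * t :=
  conj_digit_action_general s t n hn
end

section
/- Let n = 3^s·t where s ≥ 1, t > 1 and 3 ∤ t. Then for every x ∈ [3n] and every integer i with 0 ≤ i ≤ s + 1, the i-th power of the standard shuffle satisfies σ^i(x) = 3^i·t·(⌊x/t⌋ mod 3^{s+1−i}) + 3^i·(x mod t) + ⌊x / (t·3^{s+1−i})⌋. (In digit notation: σ^i shifts the base-3 digits (x_s,...,x_0) of ⌊x/t⌋ up by i positions, filling the low positions and X with 0, and then adds the integer 3^i·X + Σ_{j=0}^{i−1} 3^{i−1−j}·x_{s−j}.) -/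
/-!
Write `x = q·t + X` with `q < k^(i+j)`, and split `q = a·k^j + b` with `a < k^i`, `b < k^j`.
One application of `σ(y) = k·(y mod n) + ⌊y/n⌋` moves the top base-`k` digit of the current
position to the bottom, so after `i` steps the `i` top digits `a` of `q` have been rotated below
the digits `b` and the block `X`: `σ^i(x) = k^i·t·b + k^i·X + a`.
-/

section StdShuffle

variable {k n : ℕ}

theorem stdShuffle_apply_val (x : Fin (k * n)) :
    (stdShuffle k n x : ℕ) = k * ((x : ℕ) % n) + (x : ℕ) / n := rfl

theorem stdShuffle_apply_of_val_eq {x : Fin (k * n)} {c r : ℕ} (hr : r < n)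
    (hx : (x : ℕ) = c * n + r) : (stdShuffle k n x : ℕ) = k * r + c := by
  have hn : 0 < n := by omega
  rw [stdShuffle_apply_val, hx, Nat.add_comm (c * n), Nat.add_mul_mod_self_right,
    Nat.mod_eq_of_lt hr, Nat.add_mul_div_right _ _ hn, Nat.div_eq_of_lt hr, Nat.zero_add]

theorem stdShuffle_pow_apply_of_val_eq {t i j : ℕ} (hn : k * n = k ^ (i + j) * t)
    {a b X : ℕ} (ha : a < k ^ i) (hb : b < k ^ j) (hX : X < t) {x : Fin (k * n)}
    (hx : (x : ℕ) = (a * k ^ j + b) * t + X) :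
    ((stdShuffle k n ^ i) x : ℕ) = k ^ i * t * b + k ^ i * X + a := by
  induction i generalizing j a b with
  | zero =>
    obtain rfl : a = 0 := by simpa using ha
    simp [hx, Nat.mul_comm]
  | succ i ih =>
    have hk : 0 < k := Nat.pos_of_ne_zero fun hk => by simp [hk] at ha
    have hn' : n = k ^ (i + j) * t := by
      apply Nat.eq_of_mul_eq_mul_left hk
      rw [hn]; ring
    -- the last application of `σ` moves the lowest digit `a % k` of `a` to the bottom
    have hσi : ((stdShuffle k n ^ i) x : ℕ) =
        k ^ i * t * ((a % k) * k ^ j + b) + k ^ i * X + a / k :=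
      ih (j := j + 1) (by rw [hn]; ring_nf)
        ((Nat.div_lt_iff_lt_mul hk).mpr (by rwa [← pow_succ]))
        (by rw [pow_succ]; nlinarith [Nat.mod_lt a hk])
        (by rw [hx]; linear_combination k ^ j * t * (Nat.div_add_mod a k).symm)
    have hlow : k ^ i * t * b + k ^ i * X + a / k < n := by
      have : a / k < k ^ i := (Nat.div_lt_iff_lt_mul hk).mpr (by rwa [← pow_succ])
      calc k ^ i * t * b + k ^ i * X + a / k < k ^ i * t * b + k ^ i * (X + 1) := by linarith
        _ ≤ k ^ i * t * (b + 1) := by rw [Nat.mul_succ (k ^ i * t)]; gcongr; omega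
        _ ≤ k ^ i * t * k ^ j := by gcongr; omega
        _ = n := by rw [hn', pow_add]; ring
    rw [pow_succ', Equiv.Perm.mul_apply,
      stdShuffle_apply_of_val_eq (c := a % k) hlow (hσi.trans (by rw [hn']; ring))]
    linear_combination Nat.div_add_mod a k

theorem stdShuffle_pow_apply_val {t m : ℕ} (hn : k * n = k ^ m * t) (x : Fin (k * n)) {i : ℕ}
    (hi : i ≤ m) :
    ((stdShuffle k n ^ i) x : ℕ) =
      k ^ i * t * (((x : ℕ) / t) % k ^ (m - i)) + k ^ i * ((x : ℕ) % t) +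
        (x : ℕ) / (t * k ^ (m - i)) := by
  have hm : m = i + (m - i) := by omega
  have hxt : (x : ℕ) < k ^ i * k ^ (m - i) * t := by rw [← pow_add, ← hm, ← hn]; exact x.isLt
  have ht : 0 < t := Nat.pos_of_ne_zero fun ht => by simp [ht] at hxt
  have hk : 0 < k := Nat.pos_of_ne_zero fun hk => by simpa [hk] using x.pos
  rw [hm] at hn
  refine stdShuffle_pow_apply_of_val_eq hn ?_ (Nat.mod_lt _ (by positivity)) (Nat.mod_lt _ ht) ?_
  · rw [← Nat.div_div_eq_div_mul, Nat.div_lt_iff_lt_mul (by positivity),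
      Nat.div_lt_iff_lt_mul ht]
    exact hxt
  · rw [← Nat.div_div_eq_div_mul, Nat.div_add_mod', Nat.div_add_mod']

end StdShuffle

theorem sigma_pow_formula_general (s t n : ℕ) (hn : n = 3 ^ s * t) :
    ∀ (x : Fin (3 * n)) (i : ℕ), i ≤ s + 1 →
      ((stdShuffle 3 n ^ i) x : ℕ) =
        3 ^ i * t * (((x : ℕ) / t) % 3 ^ (s + 1 - i)) + 3 ^ i * ((x : ℕ) % t) +
          (x : ℕ) / (t * 3 ^ (s + 1 - i)) :=
  fun x _ hi => stdShuffle_pow_apply_val (by rw [hn, pow_succ']; ring) x hi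

theorem sigma_pow_formula (s t n : ℕ) (hs : 1 ≤ s) (ht : 1 < t) (h3t : ¬ 3 ∣ t) (hn : n = 3 ^ s * t) :
    ∀ (x : Fin (3 * n)) (i : ℕ), i ≤ s + 1 →
      ((stdShuffle 3 n ^ i) x : ℕ) =
        3 ^ i * t * (((x : ℕ) / t) % 3 ^ (s + 1 - i)) + 3 ^ i * ((x : ℕ) % t) +
          (x : ℕ) / (t * 3 ^ (s + 1 - i)) :=
  sigma_pow_formula_general s t n hn
end
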